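/- If F is a distribution function on (0,∞) with 1-F(x) = x^{-α} ℓ(x) for a slowly varying ℓ and 0 < α < 1, then for u > 0, t ∫_{y(t)}^∞ e^{-ux/U(t)} dF(x) where y(t) = U(t/z) (with U the tail quantile function, U(y) = F^←(1-1/y)) converges as t → ∞ to z ∫_0^1 e^{-u(zρ)^{-1/α}} dρ for each fixed z > 0. -/

import Mathlib

/-!
Write `G x = ν (x, ∞)` and `r t = U (t / z) / U t`. Integrating `e^{-cx}` by parts against `ν`
and substituting `x = w U(t)`, the quantity under the limit becomes
`t G(U(t/z)) e^{-u r t} - ∫_{r t}^∞ u e^{-uw} t G(w U(t)) dw`.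
Since `U` is the quantile of `1/G`, `t G(U t) → 1`, so regular variation gives
`t G(w U(t)) → w^{-α}` and hence `r t → v = z^{-1/α}`; dominated convergence then yields
`z e^{-uv} - ∫_v^∞ u e^{-uw} w^{-α} dw`. The same integration by parts, applied to the law of
`(zρ)^{-1/α}` with `ρ` uniform on `(0,1)`, whose tail is `y^{-α}/z` beyond `v`, identifies this
with `z ∫_0^1 e^{-u(zρ)^{-1/α}} dρ`.
-/

open MeasureTheory Filter Set Real Topology ProbabilityTheory

theorem rpow_neg_inv_rpow_neg {α x : ℝ} (hα : α ≠ 0) (hx : 0 ≤ x) :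
    (x ^ (-(1 / α))) ^ (-α) = x := by
  rw [← rpow_mul hx, neg_mul_neg, one_div, inv_mul_cancel₀ hα, rpow_one]

theorem lt_rpow_neg_inv_iff {α y s : ℝ} (hα : 0 < α) (hy : 0 < y) (hs : 0 < s) :
    y < s ^ (-(1 / α)) ↔ s < y ^ (-α) := by
  rw [one_div, ← inv_neg]
  exact lt_rpow_inv_iff_of_neg hy hs (neg_neg_of_pos hα)

theorem integral_Ioo_mul_exp_neg_mul {c a x : ℝ} (hax : a ≤ x) :
    ∫ y in Ioo a x, c * exp (-(c * y)) = exp (-(c * a)) - exp (-(c * x)) := by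
  have hderiv (y : ℝ) : HasDerivAt (fun y => -exp (-(c * y))) (c * exp (-(c * y))) y :=
    (((hasDerivAt_id y).const_mul c).neg.exp.neg).congr_deriv (by simp; ring)
  rw [← integral_Ioc_eq_integral_Ioo, ← intervalIntegral.integral_of_le hax,
    intervalIntegral.integral_eq_sub_of_hasDerivAt (fun y _ => hderiv y)
      ((by fun_prop : Continuous fun y => c * exp (-(c * y))).intervalIntegrable _ _)]
  ring

theorem setIntegral_exp_neg_mul_Ioi (μ : Measure ℝ) [IsFiniteMeasure μ] {c : ℝ} (hc : 0 < c)
    (a : ℝ) :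
    ∫ x in Ioi a, exp (-(c * x)) ∂μ =
      exp (-(c * a)) * μ.real (Ioi a) - ∫ y in Ioi a, c * exp (-(c * y)) * μ.real (Ioi y) := by
  set k : ℝ → ℝ → ℝ := fun y x => (Ioi y).indicator (fun _ => c * exp (-(c * y))) x
  have hk_int : Integrable (Function.uncurry k) ((volume.restrict (Ioi a)).prod μ) := by
    have hdom : Integrable (fun p : ℝ × ℝ => c * exp (-(c * p.1)) * 1)
        ((volume.restrict (Ioi a)).prod μ) := by
      have hexp : Integrable (fun y => c * exp (-(c * y))) (volume.restrict (Ioi a)) := by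
        simpa [neg_mul] using (exp_neg_integrableOn_Ioi a hc).const_mul c
      exact hexp.mul_prod (integrable_const (1 : ℝ))
    refine hdom.mono' ?_ (Eventually.of_forall fun p => ?_)
    · have hk : Function.uncurry k =
          {p : ℝ × ℝ | p.1 < p.2}.indicator (fun p => c * exp (-(c * p.1))) := by
        ext ⟨y, x⟩; rfl
      rw [hk]
      exact (by fun_prop : Continuous fun p : ℝ × ℝ => c * exp (-(c * p.1)))
        |>.aestronglyMeasurable.indicator (measurableSet_lt measurable_fst measurable_snd)
    · simp only [Function.uncurry, k, mul_one, norm_indicator_eq_indicator_norm]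
      exact indicator_le_self' (fun _ _ => by positivity) _ |>.trans_eq (by simp [abs_of_pos hc])
  have hy (y : ℝ) : ∫ x, k y x ∂μ = c * exp (-(c * y)) * μ.real (Ioi y) := by
    rw [integral_indicator_const _ measurableSet_Ioi, smul_eq_mul, mul_comm]
  have hx (x : ℝ) : ∫ y in Ioi a, k y x ∂volume =
      (Ioi a).indicator (fun x => exp (-(c * a)) - exp (-(c * x))) x := by
    have hk : (fun y => k y x) = (Iio x).indicator (fun y => c * exp (-(c * y))) := by
      ext y; simp only [k, indicator, mem_Ioi, mem_Iio]
    rw [hk, integral_indicator measurableSet_Iio, Measure.restrict_restrict measurableSet_Iio,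
      Iio_inter_Ioi]
    by_cases hax : a < x
    · rw [indicator_of_mem (mem_Ioi.2 hax), integral_Ioo_mul_exp_neg_mul hax.le]
    · rw [indicator_of_notMem (mt mem_Ioi.1 hax), Ioo_eq_empty hax, Measure.restrict_empty,
        integral_zero_measure]
  have hint : Integrable (fun x => exp (-(c * x))) (μ.restrict (Ioi a)) := by
    refine (integrable_const (exp (-(c * a)))).mono' (by fun_prop) ?_
    filter_upwards [ae_restrict_mem measurableSet_Ioi] with x hx
    rw [norm_of_nonneg (exp_pos _).le, exp_le_exp]
    nlinarith [mem_Ioi.1 hx]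
  have hswap := integral_integral_swap hk_int
  simp only [hy, hx] at hswap
  rw [hswap, integral_indicator measurableSet_Ioi, integral_sub (integrable_const _) hint,
    setIntegral_const, smul_eq_mul]
  ring

theorem setIntegral_exp_neg_mul_div_Ioi (μ : Measure ℝ) [IsFiniteMeasure μ] {u b : ℝ}
    (hu : 0 < u) (hb : 0 < b) (a : ℝ) :
    ∫ x in Ioi a, exp (-(u * x / b)) ∂μ =
      exp (-(u * (a / b))) * μ.real (Ioi a) -
        ∫ w in Ioi (a / b), u * exp (-(u * w)) * μ.real (Ioi (w * b)) := by
  have h := setIntegral_exp_neg_mul_Ioi μ (div_pos hu hb) a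
  rw [← div_mul_cancel₀ a hb.ne', ← integral_comp_mul_right_Ioi' _ _ hb,
    div_mul_cancel₀ a hb.ne', smul_eq_mul, ← integral_const_mul] at h
  calc _ = ∫ x in Ioi a, exp (-(u / b * x)) ∂μ := by simp_rw [mul_div_right_comm]
    _ = _ := by
      rw [h]
      congr 1
      · ring_nf
      · exact setIntegral_congr_fun measurableSet_Ioi fun w _ => by field_simp

theorem map_uniform_rpow_real_Ioi {α z : ℝ} (hα : 0 < α) (hz : 0 < z) {y : ℝ}
    (hy : z ^ (-(1 / α)) ≤ y) :
    ((volume.restrict (Ioo (0:ℝ) 1)).map (fun ρ => (z * ρ) ^ (-(1 / α)))).real (Ioi y) =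
      y ^ (-α) / z := by
  have hv : 0 < z ^ (-(1 / α)) := rpow_pos_of_pos hz _
  have hy0 : 0 < y := hv.trans_le hy
  have hφ : Measurable fun ρ : ℝ => (z * ρ) ^ (-(1 / α)) := by fun_prop
  have hle : y ^ (-α) / z ≤ 1 := by
    rw [div_le_one hz]
    calc y ^ (-α) ≤ (z ^ (-(1 / α))) ^ (-α) :=
          rpow_le_rpow_of_nonpos hv hy (neg_nonpos.2 hα.le)
      _ = z := rpow_neg_inv_rpow_neg hα.ne' hz.le
  have hset :
      (fun ρ : ℝ => (z * ρ) ^ (-(1 / α))) ⁻¹' Ioi y ∩ Ioo 0 1 = Ioo 0 (y ^ (-α) / z) := by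
    ext ρ
    simp only [mem_inter_iff, mem_preimage, mem_Ioi, mem_Ioo]
    constructor
    · rintro ⟨h, hρ0, -⟩
      rw [lt_rpow_neg_inv_iff hα hy0 (by positivity)] at h
      exact ⟨hρ0, by rw [lt_div_iff₀ hz]; linarith⟩
    · rintro ⟨hρ0, hρ⟩
      refine ⟨(lt_rpow_neg_inv_iff hα hy0 (by positivity)).2 ?_, hρ0, hρ.trans_le hle⟩
      rw [lt_div_iff₀ hz] at hρ
      linarith
  rw [measureReal_def, Measure.map_apply hφ measurableSet_Ioi,
    Measure.restrict_apply (hφ measurableSet_Ioi), hset, Real.volume_Ioo, sub_zero,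
    ENNReal.toReal_ofReal (by positivity)]

theorem mul_integral_Ioo_exp_neg_rpow {α z u : ℝ} (hα : 0 < α) (hz : 0 < z) (hu : 0 < u) :
    z * ∫ ρ in Ioo (0:ℝ) 1, exp (-(u * (z * ρ) ^ (-(1 / α)))) =
      z * exp (-(u * z ^ (-(1 / α)))) -
        ∫ w in Ioi (z ^ (-(1 / α))), u * exp (-(u * w)) * w ^ (-α) := by
  set v := z ^ (-(1 / α))
  set μ := (volume.restrict (Ioo (0:ℝ) 1)).map fun ρ => (z * ρ) ^ (-(1 / α))
  have hφ : Measurable fun ρ : ℝ => (z * ρ) ^ (-(1 / α)) := by fun_prop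
  have hμ : μ.restrict (Ioi v) = μ := by
    refine Measure.restrict_eq_self_of_ae_mem ((ae_map_iff hφ.aemeasurable measurableSet_Ioi).2
      (ae_restrict_of_forall_mem measurableSet_Ioo fun ρ hρ => ?_))
    have hzρ : z * ρ < z := by nlinarith [hρ.2]
    exact rpow_lt_rpow_of_neg (by nlinarith [hρ.1]) hzρ (by simp [hα])
  have key := setIntegral_exp_neg_mul_Ioi μ hu v
  rw [hμ, integral_map hφ.aemeasurable (by fun_prop), map_uniform_rpow_real_Ioi hα hz le_rfl,
    rpow_neg_inv_rpow_neg hα.ne' hz.le,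
    setIntegral_congr_fun measurableSet_Ioi fun y hy => by
      rw [map_uniform_rpow_real_Ioi hα hz (le_of_lt hy), ← mul_div_assoc],
    integral_div] at key
  rw [key]
  field_simp

theorem tendsto_setIntegral_Ioi_of_dominated {ι : Type*} {l : Filter ι} [l.IsCountablyGenerated]
    {f : ι → ℝ → ℝ} {g bound : ℝ → ℝ} {r : ι → ℝ} {a v : ℝ} (hav : a < v)
    (hr : Tendsto r l (𝓝 v))
    (hf_meas : ∀ᶠ i in l, AEStronglyMeasurable (f i) (volume.restrict (Ioi a)))
    (h_bound : ∀ᶠ i in l, ∀ w, a < w → ‖f i w‖ ≤ bound w)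
    (bound_integrable : IntegrableOn bound (Ioi a))
    (h_lim : ∀ w, v < w → Tendsto (fun i => f i w) l (𝓝 (g w))) :
    Tendsto (fun i => ∫ w in Ioi (r i), f i w) l (𝓝 (∫ w in Ioi v, g w)) := by
  have hcut {b : ℝ} (hab : a ≤ b) (h : ℝ → ℝ) :
      ∫ w in Ioi b, h w = ∫ w in Ioi a, (Ioi b).indicator h w := by
    rw [integral_indicator measurableSet_Ioi, Measure.restrict_restrict measurableSet_Ioi,
      Ioi_inter_Ioi, sup_eq_left.2 hab]
  rw [hcut hav.le]
  refine (tendsto_integral_filter_of_dominated_convergence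
    (F := fun i => (Ioi (r i)).indicator (f i)) bound ?_ ?_ bound_integrable ?_).congr' ?_
  · filter_upwards [hf_meas] with i hi
    exact hi.indicator measurableSet_Ioi
  · filter_upwards [h_bound] with i hi
    filter_upwards [ae_restrict_mem measurableSet_Ioi] with w hw
    rw [norm_indicator_eq_indicator_norm]
    exact (indicator_le_self' (fun _ _ => norm_nonneg _) w).trans (hi w hw)
  · filter_upwards [ae_restrict_of_ae (Measure.ae_ne volume v)] with w hwv
    rcases hwv.lt_or_gt with hwv | hvw
    · rw [indicator_of_notMem (notMem_Ioi.2 hwv.le)]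
      refine tendsto_const_nhds.congr' ?_
      filter_upwards [hr.eventually (eventually_gt_nhds hwv)] with i hi
      exact (indicator_of_notMem (notMem_Ioi.2 hi.le) _).symm
    · rw [indicator_of_mem (mem_Ioi.2 hvw)]
      refine (h_lim w hvw).congr' ?_
      filter_upwards [hr.eventually (eventually_lt_nhds hvw)] with i hi
      exact (indicator_of_mem (mem_Ioi.2 hi) _).symm
  · filter_upwards [hr.eventually (eventually_gt_nhds hav)] with i hi
    exact (hcut hi.le _).symm

def IsSlowlyVarying (ℓ : ℝ → ℝ) : Prop :=
  ∀ c : ℝ, 0 < c → Tendsto (fun x => ℓ (c * x) / ℓ x) atTop (𝓝 1)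

def IsRegularlyVarying (G : ℝ → ℝ) (ρ : ℝ) : Prop :=
  ∀ c : ℝ, 0 < c → Tendsto (fun x => G (c * x) / G x) atTop (𝓝 (c ^ ρ))

theorem IsSlowlyVarying.isRegularlyVarying {ℓ G : ℝ → ℝ} {ρ : ℝ} (hℓ : IsSlowlyVarying ℓ)
    (hG : ∀ x, 0 < x → G x = x ^ ρ * ℓ x) : IsRegularlyVarying G ρ := by
  intro c hc
  have h := (hℓ c hc).const_mul (c ^ ρ)
  rw [mul_one] at h
  refine h.congr' ?_
  filter_upwards [eventually_gt_atTop 0] with x hx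
  rw [hG x hx, hG (c * x) (by positivity), mul_rpow hc.le hx.le, mul_assoc,
    mul_div_assoc, mul_div_mul_left _ _ (rpow_pos_of_pos hx ρ).ne']

/-- `U t = inf {x | G x ≤ 1/t}` for a nonincreasing right-continuous tail `G`, stated as the
Galois connection it satisfies. -/
def IsTailQuantile (G U : ℝ → ℝ) : Prop :=
  ∀ t : ℝ, 1 < t → ∀ x, U t ≤ x ↔ G x ≤ t⁻¹

namespace IsTailQuantile

variable {G U : ℝ → ℝ} (hU : IsTailQuantile G U)
include hU

theorem mul_apply_le_one {t : ℝ} (ht : 1 < t) : t * G (U t) ≤ 1 := by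
  have h := (hU t ht (U t)).1 le_rfl
  rwa [← mul_le_mul_iff_of_pos_left (by positivity : 0 < t), mul_inv_cancel₀ (by positivity)]
    at h

theorem one_lt_mul_apply {t x : ℝ} (ht : 1 < t) (hx : x < U t) : 1 < t * G x := by
  have h : t⁻¹ < G x := not_le.1 fun h => hx.not_ge ((hU t ht x).2 h)
  rwa [← mul_lt_mul_iff_of_pos_left (by positivity : 0 < t), mul_inv_cancel₀ (by positivity)]
    at h

theorem apply_div_le_iff {t z x : ℝ} (hz : 0 < z) (hzt : z < t) :
    U (t / z) ≤ x ↔ t * G x ≤ z := by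
  rw [hU (t / z) ((one_lt_div hz).2 hzt), inv_div, le_div_iff₀ (hz.trans hzt), mul_comm]

theorem tendsto_atTop (hGpos : ∀ x, 0 < x → 0 < G x) : Tendsto U atTop atTop := by
  refine Filter.tendsto_atTop.2 fun M => ?_
  have hGM : 0 < G (max M 1) := hGpos _ (lt_max_of_lt_right one_pos)
  filter_upwards [tendsto_inv_atTop_zero.eventually (eventually_lt_nhds hGM),
    eventually_gt_atTop 1] with t hGt ht
  exact (le_max_left M 1).trans (not_le.1 fun h => hGt.not_ge ((hU t ht _).1 h)).le

theorem tendsto_mul_apply_self {ρ : ℝ} (hGpos : ∀ x, 0 < x → 0 < G x)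
    (hG : IsRegularlyVarying G ρ) : Tendsto (fun t => t * G (U t)) atTop (𝓝 1) := by
  refine tendsto_order.2 ⟨fun a ha => ?_, fun b hb => ?_⟩
  · have hcont : Tendsto (fun c : ℝ => (c ^ ρ)⁻¹) (𝓝[<] 1) (𝓝 1) := by
      have h : ContinuousAt (fun c : ℝ => (c ^ ρ)⁻¹) 1 :=
        (continuousAt_id.rpow_const (Or.inl one_ne_zero)).inv₀ (by simp)
      simpa using h.tendsto.mono_left nhdsWithin_le_nhds
    obtain ⟨c, hac, hc⟩ :=
      ((hcont.eventually (lt_mem_nhds ha)).and (Ioo_mem_nhdsLT zero_lt_one)).exists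
    have hratio : Tendsto (fun t => G (U t) / G (c * U t)) atTop (𝓝 (c ^ ρ)⁻¹) := by
      refine (((hG c hc.1).comp (hU.tendsto_atTop hGpos)).inv₀
        (rpow_pos_of_pos hc.1 ρ).ne').congr fun t => ?_
      simp only [Function.comp, inv_div]
    filter_upwards [hratio.eventually (lt_mem_nhds hac), eventually_gt_atTop 1,
      (hU.tendsto_atTop hGpos).eventually_gt_atTop 0] with t hat ht hUt
    have hcU : 0 < G (c * U t) := hGpos _ (mul_pos hc.1 hUt)
    calc a < G (U t) / G (c * U t) := hat
      _ < t * G (c * U t) * (G (U t) / G (c * U t)) :=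
        lt_mul_of_one_lt_left (div_pos (hGpos _ hUt) hcU)
          (hU.one_lt_mul_apply ht (mul_lt_of_lt_one_left hUt hc.2))
      _ = t * G (U t) := by field_simp
  · filter_upwards [eventually_gt_atTop 1] with t ht
    exact (hU.mul_apply_le_one ht).trans_lt hb

theorem tendsto_mul_apply_mul {ρ : ℝ} (hGpos : ∀ x, 0 < x → 0 < G x)
    (hG : IsRegularlyVarying G ρ) {w : ℝ} (hw : 0 < w) :
    Tendsto (fun t => t * G (w * U t)) atTop (𝓝 (w ^ ρ)) := by
  have h := (hU.tendsto_mul_apply_self hGpos hG).mul ((hG w hw).comp (hU.tendsto_atTop hGpos))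
  rw [one_mul] at h
  refine h.congr' ?_
  filter_upwards [(hU.tendsto_atTop hGpos).eventually_gt_atTop 0] with t hUt
  have := (hGpos _ hUt).ne'
  simp only [Function.comp]
  field_simp

theorem tendsto_mul_apply_div {ρ : ℝ} (hGpos : ∀ x, 0 < x → 0 < G x)
    (hG : IsRegularlyVarying G ρ) {z : ℝ} (hz : 0 < z) :
    Tendsto (fun t => t * G (U (t / z))) atTop (𝓝 z) := by
  have h :=
    ((hU.tendsto_mul_apply_self hGpos hG).comp (tendsto_id.atTop_div_const hz)).const_mul z
  rw [mul_one] at h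
  refine h.congr fun t => ?_
  simp only [Function.comp, id]
  field_simp

theorem tendsto_apply_div_div_apply {α : ℝ} (hα : 0 < α) (hGpos : ∀ x, 0 < x → 0 < G x)
    (hG : IsRegularlyVarying G (-α)) {z : ℝ} (hz : 0 < z) :
    Tendsto (fun t => U (t / z) / U t) atTop (𝓝 (z ^ (-(1 / α)))) := by
  set v := z ^ (-(1 / α))
  have hv : 0 < v := rpow_pos_of_pos hz _
  have hvz : v ^ (-α) = z := rpow_neg_inv_rpow_neg hα.ne' hz.le
  have hUpos := (hU.tendsto_atTop hGpos).eventually_gt_atTop 0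
  refine tendsto_order.2 ⟨fun a ha => ?_, fun b hb => ?_⟩
  · obtain ⟨w, haw, hwv⟩ := exists_between (max_lt ha hv)
    have hw : 0 < w := (le_max_right a 0).trans_lt haw
    have hzw : z < w ^ (-α) := hvz ▸ rpow_lt_rpow_of_neg hw hwv (neg_neg_of_pos hα)
    filter_upwards [(hU.tendsto_mul_apply_mul hGpos hG hw).eventually (lt_mem_nhds hzw),
      eventually_gt_atTop z, hUpos] with t hzt ht hUt
    have hlt : w * U t < U (t / z) :=
      not_le.1 fun h => hzt.not_ge ((hU.apply_div_le_iff hz ht).1 h)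
    exact (le_max_left a 0).trans_lt (haw.trans ((lt_div_iff₀ hUt).2 hlt))
  · obtain ⟨w, hvw, hwb⟩ := exists_between hb
    have hw : 0 < w := hv.trans hvw
    have hwz : w ^ (-α) < z := hvz ▸ rpow_lt_rpow_of_neg hv hvw (neg_neg_of_pos hα)
    filter_upwards [(hU.tendsto_mul_apply_mul hGpos hG hw).eventually (gt_mem_nhds hwz),
      eventually_gt_atTop z, hUpos] with t hzt ht hUt
    exact ((div_le_iff₀ hUt).2 ((hU.apply_div_le_iff hz ht).2 hzt.le)).trans_lt hwb

end IsTailQuantile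

theorem StieltjesFunction.sInf_le_iff (f : StieltjesFunction ℝ) {p x : ℝ}
    (hne : {y | p ≤ f y}.Nonempty) (hbdd : BddBelow {y | p ≤ f y}) :
    sInf {y | p ≤ f y} ≤ x ↔ p ≤ f x := by
  refine ⟨fun h => ?_, fun h => csInf_le hbdd h⟩
  have hq : p ≤ f (sInf {y | p ≤ f y}) := by
    refine ge_of_tendsto
      ((f.right_continuous _).mono_left (nhdsWithin_mono _ Ioi_subset_Ici_self)) ?_
    filter_upwards [self_mem_nhdsWithin] with y hy
    obtain ⟨s, hs, hsy⟩ := (csInf_lt_iff hbdd hne).1 hy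
    exact hs.trans (f.mono hsy.le)
  exact hq.trans (f.mono h)

theorem measureReal_Ioi_eq_one_sub_cdf (ν : Measure ℝ) [IsProbabilityMeasure ν] (x : ℝ) :
    ν.real (Ioi x) = 1 - cdf ν x := by
  rw [← compl_Iic, measureReal_compl measurableSet_Iic, probReal_univ, cdf_eq_real]

theorem isTailQuantile_of_eq_sInf (ν : Measure ℝ) [IsProbabilityMeasure ν] {U : ℝ → ℝ}
    (hU : ∀ t, 1 < t → U t = sInf {x | 1 - 1 / t ≤ cdf ν x}) :
    IsTailQuantile (fun x => ν.real (Ioi x)) U := by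
  intro t ht x
  have hp0 : 0 < 1 - 1 / t := sub_pos.2 ((div_lt_one (by linarith)).2 ht)
  have hp1 : 1 - 1 / t < 1 := sub_lt_self 1 (by positivity)
  have hne : {x | 1 - 1 / t ≤ cdf ν x}.Nonempty :=
    ((tendsto_cdf_atTop ν).eventually (eventually_ge_nhds hp1)).exists
  have hbdd : BddBelow {x | 1 - 1 / t ≤ cdf ν x} := by
    obtain ⟨b, hb⟩ := ((tendsto_cdf_atBot ν).eventually (eventually_lt_nhds hp0)).exists
    exact ⟨b, fun y hy => le_of_not_gt fun hyb => (hy.out.trans (monotone_cdf ν hyb.le)).not_gt hb⟩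
  show U t ≤ x ↔ ν.real (Ioi x) ≤ t⁻¹
  rw [hU t ht, (cdf ν).sInf_le_iff hne hbdd, measureReal_Ioi_eq_one_sub_cdf, one_div, sub_le_comm]

theorem IsTailQuantile.tendsto_integral_Ioi {G U : ℝ → ℝ} (hU : IsTailQuantile G U)
    (hGanti : Antitone G) (hGpos : ∀ x, 0 < x → 0 < G x) {α : ℝ} (hα : 0 < α)
    (hG : IsRegularlyVarying G (-α)) {z u : ℝ} (hz : 0 < z) (hu : 0 < u) :
    Tendsto (fun t => ∫ w in Ioi (U (t / z) / U t), u * exp (-(u * w)) * (t * G (w * U t)))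
      atTop (𝓝 (∫ w in Ioi (z ^ (-(1 / α))), u * exp (-(u * w)) * w ^ (-α))) := by
  set v := z ^ (-(1 / α))
  have hv : 0 < v := rpow_pos_of_pos hz _
  set C := (v / 2) ^ (-α) + 1
  have hC : ∀ᶠ t in atTop, t * G (v / 2 * U t) < C :=
    (hU.tendsto_mul_apply_mul hGpos hG (half_pos hv)).eventually (gt_mem_nhds (lt_add_one _))
  refine tendsto_setIntegral_Ioi_of_dominated (bound := fun w => u * exp (-(u * w)) * C)
    (half_lt_self hv) (hU.tendsto_apply_div_div_apply hα hGpos hG hz)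
    (Eventually.of_forall fun t => ?_) ?_ ?_
    fun w hw => (hU.tendsto_mul_apply_mul hGpos hG (hv.trans hw)).const_mul _
  · exact ((by fun_prop : Measurable fun w => u * exp (-(u * w))).mul
      ((hGanti.measurable.comp (measurable_id.mul_const _)).const_mul t)).aestronglyMeasurable
  · filter_upwards [hC, eventually_ge_atTop 0, (hU.tendsto_atTop hGpos).eventually_gt_atTop 0]
      with t hCt ht hUt w hw
    have hGw : 0 < G (w * U t) := hGpos _ (mul_pos ((half_pos hv).trans hw) hUt)
    rw [norm_of_nonneg (by positivity)]
    gcongr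
    calc t * G (w * U t) ≤ t * G (v / 2 * U t) :=
          mul_le_mul_of_nonneg_left (hGanti (mul_le_mul_of_nonneg_right hw.le hUt.le)) ht
      _ ≤ C := hCt.le
  · have h : IntegrableOn (fun w => exp (-(u * w))) (Ioi (v / 2)) := by
      simpa [neg_mul] using exp_neg_integrableOn_Ioi (v / 2) hu
    exact (h.const_mul u).mul_const C

theorem tail_integral_limit_regular_variation_general
    (ν : Measure ℝ) [IsProbabilityMeasure ν]
    (F : ℝ → ℝ) (hF : ∀ x, F x = (ν (Set.Iic x)).toReal)
    (α : ℝ) (hα0 : 0 < α)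
    (ℓ : ℝ → ℝ) (hℓpos : ∀ x, 0 < x → 0 < ℓ x)
    (hℓslow : ∀ c : ℝ, 0 < c → Tendsto (fun x => ℓ (c * x) / ℓ x) atTop (nhds 1))
    (htail : ∀ x, 0 < x → 1 - F x = x ^ (-α) * ℓ x)
    (U : ℝ → ℝ) (hU : ∀ y, 1 < y → U y = sInf {x : ℝ | 1 - 1 / y ≤ F x})
    (z u : ℝ) (hz : 0 < z) (hu : 0 < u) :
    Tendsto (fun t : ℝ => t * ∫ x in Set.Ioi (U (t / z)), Real.exp (-(u * x / U t)) ∂ν)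
      atTop
      (nhds (z * ∫ ρ in Set.Ioo (0 : ℝ) 1, Real.exp (-(u * (z * ρ) ^ (-(1 / α)))))) := by
  obtain rfl : F = cdf ν := funext fun x => by rw [hF, cdf_eq_real, measureReal_def]
  set G : ℝ → ℝ := fun x => ν.real (Ioi x)
  have hGU : IsTailQuantile G U := isTailQuantile_of_eq_sInf ν hU
  have hGα (x : ℝ) (hx : 0 < x) : G x = x ^ (-α) * ℓ x :=
    (measureReal_Ioi_eq_one_sub_cdf ν x).trans (htail x hx)
  have hGpos (x : ℝ) (hx : 0 < x) : 0 < G x :=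
    hGα x hx ▸ mul_pos (rpow_pos_of_pos hx _) (hℓpos x hx)
  have hG : IsRegularlyVarying G (-α) := IsSlowlyVarying.isRegularlyVarying hℓslow hGα
  have hGanti : Antitone G := fun x y hxy => measureReal_mono (Ioi_subset_Ioi hxy)
  have hexp := (continuous_exp.tendsto _).comp
    ((hGU.tendsto_apply_div_div_apply hα0 hGpos hG hz).const_mul u).neg
  rw [mul_integral_Ioo_exp_neg_rpow hα0 hz hu]
  refine (((hGU.tendsto_mul_apply_div hGpos hG hz).mul hexp).sub
    (hGU.tendsto_integral_Ioi hGanti hGpos hα0 hG hz hu)).congr' ?_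
  filter_upwards [(hGU.tendsto_atTop hGpos).eventually_gt_atTop 0] with t hUt
  rw [setIntegral_exp_neg_mul_div_Ioi ν hu hUt, mul_sub, ← integral_const_mul]
  simp only [G, Function.comp_apply]
  congr 1
  · ring
  · exact setIntegral_congr_fun measurableSet_Ioi fun w _ => by ring

/-- Let `ν` be the law of a positive random variable with distribution function
`F x = ν(-∞, x]` satisfying `1 - F(x) = x^{-α} ℓ(x)` for `0 < α < 1` and a slowly varying
`ℓ`, and let `U(y) = inf {x | 1 - 1/y ≤ F x}` be the tail quantile function. Then for fixed
`z > 0` and `u > 0`,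
`t ∫_{U(t/z)}^∞ e^{-u x/U(t)} dF(x) → z ∫_0^1 e^{-u(zρ)^{-1/α}} dρ` as `t → ∞`. -/
theorem tail_integral_limit_regular_variation
    (ν : Measure ℝ) [IsProbabilityMeasure ν] (hsupp : ν (Set.Iic 0) = 0)
    (F : ℝ → ℝ) (hF : ∀ x, F x = (ν (Set.Iic x)).toReal)
    (α : ℝ) (hα0 : 0 < α) (hα1 : α < 1)
    (ℓ : ℝ → ℝ) (hℓpos : ∀ x, 0 < x → 0 < ℓ x)
    (hℓslow : ∀ c : ℝ, 0 < c → Tendsto (fun x => ℓ (c * x) / ℓ x) atTop (nhds 1))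
    (htail : ∀ x, 0 < x → 1 - F x = x ^ (-α) * ℓ x)
    (U : ℝ → ℝ) (hU : ∀ y, 1 < y → U y = sInf {x : ℝ | 1 - 1 / y ≤ F x})
    (z u : ℝ) (hz : 0 < z) (hu : 0 < u) :
    Tendsto (fun t : ℝ => t * ∫ x in Set.Ioi (U (t / z)), Real.exp (-(u * x / U t)) ∂ν)
      atTop
      (nhds (z * ∫ ρ in Set.Ioo (0 : ℝ) 1, Real.exp (-(u * (z * ρ) ^ (-(1 / α)))))) :=
  tail_integral_limit_regular_variation_general ν F hF α hα0 ℓ hℓpos hℓslow htail U hU z u hz hu
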